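/- Let f be holomorphic on the upper half-plane ℂ₊ = {z : Im z > 0} with ∫_{ℂ₊} |f(z)| e^{−Im z} dλ(z) < +∞. Then there is a constant C (depending on f) such that for all z ∈ ℂ₊: ln|f(z)| ≤ Im z + 2 ln(1/Im z) + C. -/

import Mathlib

/-!
The function `g z = f z * exp (I z)` is holomorphic on `ℂ₊` with `‖g z‖ = ‖f z‖ e^{-Im z}`, so
`g` is integrable there. By the area mean value property, `π r² ‖g z‖ ≤ ∫_{B(z,r)} ‖g‖`; taking
`r = Im z / 2`, so that the disc stays in `ℂ₊`, gives `‖f z‖ e^{-Im z} (Im z)² ≤ 4/π ∫_{ℂ₊} ‖g‖`,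
and taking logarithms gives the claim.
-/

open MeasureTheory Metric Real Set

section BallIntegral

variable {E : Type*} [NormedAddCommGroup E] [NormedSpace ℝ E]

theorem setIntegral_ball_eq_setIntegral_circleMap (f : ℂ → E) (c : ℂ) (r : ℝ) :
    ∫ w in ball c r, f w = ∫ p in Ioo 0 r ×ˢ Ioo (-π) π, p.1 • f (circleMap c p.1 p.2) := by
  set S := (fun p : ℝ × ℝ => circleMap c p.1 p.2) ⁻¹' ball c r
  have hpolar (p : ℝ × ℝ) : c + Complex.polarCoord.symm p = circleMap c p.1 p.2 := by
    simp [circleMap, Complex.exp_mul_I]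
  have htarget : polarCoord.target ∩ S = Ioo 0 r ×ˢ Ioo (-π) π := by
    ext ⟨s, θ⟩
    simp only [S, polarCoord_target, mem_inter_iff, mem_prod, mem_preimage, mem_ball,
      dist_eq_norm, circleMap_sub_center, norm_circleMap_zero, mem_Ioi, mem_Ioo]
    constructor
    · rintro ⟨⟨hs, hθ⟩, hsr⟩; exact ⟨⟨hs, by rwa [abs_of_pos hs] at hsr⟩, hθ⟩
    · rintro ⟨⟨hs, hsr⟩, hθ⟩; exact ⟨⟨hs, hθ⟩, by rwa [abs_of_pos hs]⟩
  rw [← htarget, ← setIntegral_indicator (measurableSet_ball.preimage (by fun_prop)),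
    ← integral_indicator measurableSet_ball, ← integral_add_left_eq_self _ c,
    ← Complex.integral_comp_polarCoord_symm]
  refine setIntegral_congr_fun polarCoord.open_target.measurableSet fun p _ => ?_
  rw [hpolar]
  by_cases hp : p ∈ S
  · rw [indicator_of_mem hp, indicator_of_mem (show circleMap c p.1 p.2 ∈ ball c r from hp)]
  · rw [indicator_of_notMem hp,
      indicator_of_notMem (show circleMap c p.1 p.2 ∉ ball c r from hp), smul_zero]

theorem setIntegral_Ioo_circleMap_eq_circleAverage (f : ℂ → E) (c : ℂ) (R : ℝ) :
    ∫ θ in Ioo (-π) π, f (circleMap c R θ) = (2 * π) • circleAverage f c R := by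
  rw [circleAverage_eq_integral_add (-π), smul_inv_smul₀ two_pi_pos.ne',
    intervalIntegral.integral_comp_add_right (fun θ => f (circleMap c R θ)),
    intervalIntegral.integral_of_le (by linarith [pi_pos]), integral_Ioc_eq_integral_Ioo]
  ring_nf

theorem setIntegral_ball_eq_integral_smul_circleAverage {f : ℂ → E} {c : ℂ} {r : ℝ}
    (hr : 0 ≤ r) (hf : ContinuousOn f (closedBall c r)) :
    ∫ w in ball c r, f w = (2 * π) • ∫ s in 0..r, s • circleAverage f c s := by
  have hmaps : MapsTo (fun p : ℝ × ℝ => circleMap c p.1 p.2) (Icc 0 r ×ˢ Icc (-π) π)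
      (closedBall c r) := fun p hp => by
    simpa [dist_eq_norm, circleMap_sub_center, abs_of_nonneg hp.1.1] using hp.1.2
  have hintegrable : IntegrableOn (fun p : ℝ × ℝ => p.1 • f (circleMap c p.1 p.2))
      (Ioo 0 r ×ˢ Ioo (-π) π) (volume.prod volume) :=
    ((continuousOn_fst.smul (hf.comp (by fun_prop) hmaps)).integrableOn_compact
      (isCompact_Icc.prod isCompact_Icc)).mono_set
      (prod_mono Ioo_subset_Icc_self Ioo_subset_Icc_self)
  rw [setIntegral_ball_eq_setIntegral_circleMap, Measure.volume_eq_prod, setIntegral_prod _ hintegrable,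
    intervalIntegral.integral_of_le hr, integral_Ioc_eq_integral_Ioo, ← integral_smul]
  refine setIntegral_congr_fun measurableSet_Ioo fun s _ => ?_
  rw [integral_smul, setIntegral_Ioo_circleMap_eq_circleAverage, smul_comm]

end BallIntegral

section AreaMeanValue

variable {F : Type*} [NormedAddCommGroup F] [NormedSpace ℂ F] [CompleteSpace F]
  {g : ℂ → F} {c : ℂ} {r : ℝ}

theorem DifferentiableOn.setIntegral_ball_eq (hr : 0 ≤ r)
    (hg : DifferentiableOn ℂ g (closedBall c r)) :
    ∫ w in ball c r, g w = (π * r ^ 2) • g c := by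
  have hmean : EqOn (fun s => s • circleAverage g c s) (fun s => s • g c) (uIcc 0 r) :=
    fun s hs => by
      have hs : |s| ≤ r := by
        rw [uIcc_of_le hr] at hs
        exact (abs_of_nonneg hs.1).le.trans hs.2
      dsimp only
      rw [(hg.mono (closure_ball_subset_closedBall.trans
        (closedBall_subset_closedBall hs))).diffContOnCl.circleAverage]
  rw [setIntegral_ball_eq_integral_smul_circleAverage hr hg.continuousOn,
    intervalIntegral.integral_congr hmean, intervalIntegral.integral_smul_const, integral_id,
    smul_smul]
  ring_nf

theorem DifferentiableOn.norm_le_setIntegral_ball_norm (hr : 0 ≤ r)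
    (hg : DifferentiableOn ℂ g (closedBall c r)) :
    π * r ^ 2 * ‖g c‖ ≤ ∫ w in ball c r, ‖g w‖ :=
  calc π * r ^ 2 * ‖g c‖ = ‖∫ w in ball c r, g w‖ := by
        rw [hg.setIntegral_ball_eq hr, norm_smul, norm_of_nonneg (by positivity)]
    _ ≤ ∫ w in ball c r, ‖g w‖ := norm_integral_le_integral_norm _

end AreaMeanValue

theorem closedBall_half_im_subset {z : ℂ} (hz : 0 < z.im) :
    closedBall z (z.im / 2) ⊆ {w : ℂ | 0 < w.im} := fun w hw => by
  have := (abs_le.1 ((Complex.abs_im_le_norm (w - z)).trans (mem_closedBall_iff_norm.1 hw))).1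
  rw [Complex.sub_im] at this
  show 0 < w.im
  linarith

theorem norm_mul_exp_neg_im_le_setIntegral {f : ℂ → ℂ}
    (hf : DifferentiableOn ℂ f {z : ℂ | 0 < z.im})
    (hint : IntegrableOn (fun z : ℂ => ‖f z‖ * exp (-z.im)) {z : ℂ | 0 < z.im})
    {z : ℂ} (hz : 0 < z.im) :
    π * (z.im / 2) ^ 2 * (‖f z‖ * exp (-z.im)) ≤
      ∫ w in {w : ℂ | 0 < w.im}, ‖f w‖ * exp (-w.im) := by
  set g : ℂ → ℂ := fun w => f w * Complex.exp (Complex.I * w)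
  have hg_norm (w : ℂ) : ‖g w‖ = ‖f w‖ * exp (-w.im) := by
    simp [g, Complex.norm_exp]
  have hsub := closedBall_half_im_subset hz
  calc π * (z.im / 2) ^ 2 * (‖f z‖ * exp (-z.im)) = π * (z.im / 2) ^ 2 * ‖g z‖ := by
        rw [hg_norm]
    _ ≤ ∫ w in ball z (z.im / 2), ‖g w‖ :=
        ((hf.mul (by fun_prop)).mono hsub).norm_le_setIntegral_ball_norm (by positivity)
    _ = ∫ w in ball z (z.im / 2), ‖f w‖ * exp (-w.im) := by simp only [hg_norm]
    _ ≤ ∫ w in {w : ℂ | 0 < w.im}, ‖f w‖ * exp (-w.im) :=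
        setIntegral_mono_set hint (ae_of_all _ fun w => by positivity)
          (ball_subset_closedBall.trans hsub).eventuallyLE

theorem log_le_add_two_mul_log_one_div_add_log {x t A : ℝ} (hx : 0 ≤ x) (ht : 0 < t)
    (h : x * t ^ 2 * exp (-t) ≤ A) : log x ≤ t + 2 * log (1 / t) + log (A + 2) := by
  have hxA : x * t ^ 2 ≤ A * exp t := by
    rwa [← div_le_iff₀ (exp_pos t), div_eq_mul_inv, ← exp_neg]
  have hsq : t ^ 2 ≤ 2 * exp t := by
    have := pow_div_factorial_le_exp t ht.le 2
    norm_num at this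
    linarith
  have hA : 0 ≤ A := le_trans (by positivity) h
  set B := (A + 2) * exp t / t ^ 2
  have hxB : x ≤ B := by
    rw [le_div_iff₀ (by positivity)]
    nlinarith [exp_pos t]
  have hB : 1 ≤ B := by
    rw [le_div_iff₀ (by positivity)]
    nlinarith [exp_pos t, mul_nonneg hx (sq_nonneg t)]
  -- The `+ 2` gives `1 ≤ B` through `t² ≤ 2 eᵗ`; then passing through `log⁺` also covers
  -- `x = 0`, where `log 0 = 0`.
  calc log x ≤ log⁺ x := le_max_right _ _
    _ ≤ log⁺ B := posLog_le_posLog hx hxB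
    _ = log B := posLog_eq_log (by rwa [abs_of_pos (by linarith)])
    _ = t + 2 * log (1 / t) + log (A + 2) := by
      rw [log_div (by positivity) (by positivity), log_mul (by positivity) (exp_pos t).ne',
        log_exp, log_pow, one_div, log_inv]
      push_cast
      ring

/-- If `f` is holomorphic on the upper half-plane `ℂ₊` with
`∫_{ℂ₊} |f| e^{−Im z} dλ < ∞`, then `ln|f(z)| ≤ Im z + 2 ln(1/Im z) + C` on `ℂ₊` for some
constant `C` depending on `f`. -/
theorem upper_half_plane_estimate (f : ℂ → ℂ)
    (hf : DifferentiableOn ℂ f {z : ℂ | 0 < z.im})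
    (hint : IntegrableOn (fun z : ℂ => ‖f z‖ * Real.exp (-z.im)) {z : ℂ | 0 < z.im}) :
    ∃ C : ℝ, ∀ z : ℂ, 0 < z.im →
      Real.log ‖f z‖ ≤ z.im + 2 * Real.log (1 / z.im) + C := by
  set M := ∫ w in {w : ℂ | 0 < w.im}, ‖f w‖ * exp (-w.im)
  refine ⟨log (4 * M / π + 2), fun z hz => log_le_add_two_mul_log_one_div_add_log
    (norm_nonneg _) hz ?_⟩
  have hmean := norm_mul_exp_neg_im_le_setIntegral hf hint hz
  rw [le_div_iff₀ pi_pos]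
  linear_combination 4 * hmean
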